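/- arXiv:1407.6918 — 5 statements merged into one kernel-verified Lean document; each statement's English description precedes it below -/
import Mathlib

section
/- Let H be a Hilbert space, ξ ∈ H a unit vector, and for each i = 1,…,c let E_i, F_i be orthogonal projections on H such that (E_i) and (F_i) each sum to the identity and each E_i commutes with each F_j. If ∑_{i=1}^c ⟨E_i F_i ξ, ξ⟩ = 1, then E_i ξ = F_i ξ for every i. -/
noncomputable section
local notation "⟪" x ", " y "⟫" => @inner ℂ _ _ x y

/-- If mutually commuting PVMs `(E i)` and `(F i)` satisfy
`∑ i ⟨E i F i ξ, ξ⟩ = 1` for a unit vector `ξ`, then `E i ξ = F i ξ` for all `i`. -/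
theorem stmt0 {H : Type*} [NormedAddCommGroup H] [InnerProductSpace ℂ H] [CompleteSpace H]
    {c : ℕ} (E F : Fin c → (H →L[ℂ] H))
    (hEproj : ∀ i, IsIdempotentElem (E i) ∧ ContinuousLinearMap.adjoint (E i) = E i)
    (hFproj : ∀ i, IsIdempotentElem (F i) ∧ ContinuousLinearMap.adjoint (F i) = F i)
    (hEsum : ∑ i, E i = 1) (hFsum : ∑ i, F i = 1)
    (hcomm : ∀ i j, E i * F j = F j * E i)
    (ξ : H) (hξ : ‖ξ‖ = 1)
    (hsum : ∑ i, ⟪(E i) ((F i) ξ), ξ⟫ = 1) :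
    ∀ i, (E i) ξ = (F i) ξ := by
  -- G i j := E i * F j is an idempotent self-adjoint operator
  have hGid : ∀ i j, IsIdempotentElem (E i * F j) := by
    intro i j
    have hE := (hEproj i).1
    have hF := (hFproj j).1
    unfold IsIdempotentElem
    calc (E i * F j) * (E i * F j) = E i * (F j * E i) * F j := by noncomm_ring
      _ = E i * (E i * F j) * F j := by rw [← hcomm]
      _ = (E i * E i) * (F j * F j) := by noncomm_ring
      _ = E i * F j := by rw [hE, hF]
  have hGadj : ∀ i j, ContinuousLinearMap.adjoint (E i * F j) = E i * F j := by
    intro i j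
    have h0 : E i * F j = (E i).comp (F j) := rfl
    rw [h0, ContinuousLinearMap.adjoint_comp (E i) (F j)]
    show ContinuousLinearMap.adjoint (F j) * ContinuousLinearMap.adjoint (E i) = _
    rw [(hEproj i).2, (hFproj j).2, ← hcomm]
    rfl
  have hC : ∀ i j, ⟪(E i) ((F j) ξ), ξ⟫ = ((‖(E i) ((F j) ξ)‖ : ℝ) : ℂ) ^ 2 := by
    intro i j
    have h1 : (E i) ((F j) ξ) = (E i * F j) ξ := rfl
    rw [h1]
    conv_lhs => rw [← hGid i j]
    rw [ContinuousLinearMap.mul_apply, ← ContinuousLinearMap.adjoint_inner_right,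
      hGadj i j, inner_self_eq_norm_sq_to_K]
    norm_cast
  set a : Fin c → Fin c → ℝ := fun i j => ‖(E i) ((F j) ξ)‖ ^ 2 with ha
  -- total sum is 1
  have htot : ∑ i, ∑ j, a i j = 1 := by
    have h1 : ∑ i, ∑ j, ⟪(E i) ((F j) ξ), ξ⟫ = ⟪ξ, ξ⟫ := by
      have hFξ : ∑ j, (F j) ξ = ξ := by
        rw [← ContinuousLinearMap.sum_apply, hFsum]; rfl
      calc ∑ i, ∑ j, ⟪(E i) ((F j) ξ), ξ⟫
          = ∑ i, ⟪(E i) (∑ j, (F j) ξ), ξ⟫ := by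
            refine Finset.sum_congr rfl fun i _ => ?_
            rw [map_sum, sum_inner]
        _ = ∑ i, ⟪(E i) ξ, ξ⟫ := by rw [hFξ]
        _ = ⟪(∑ i, E i) ξ, ξ⟫ := by rw [ContinuousLinearMap.sum_apply, sum_inner]
        _ = ⟪ξ, ξ⟫ := by rw [hEsum]; rfl
    have h2 : ⟪ξ, ξ⟫ = (1 : ℂ) := by
      rw [inner_self_eq_norm_sq_to_K, hξ]; norm_num
    have h3 : ((∑ i, ∑ j, a i j : ℝ) : ℂ) = 1 := by
      rw [← h2, ← h1]
      push_cast
      refine Finset.sum_congr rfl fun i _ => Finset.sum_congr rfl fun j _ => ?_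
      rw [hC i j]; norm_cast
    exact_mod_cast h3
  have hdiag : ∑ i, a i i = 1 := by
    have h3 : ((∑ i, a i i : ℝ) : ℂ) = 1 := by
      rw [← hsum]
      push_cast
      refine Finset.sum_congr rfl fun i _ => ?_
      rw [hC i i]; norm_cast
    exact_mod_cast h3
  have hnonneg : ∀ i j, 0 ≤ a i j := fun i j => sq_nonneg _
  -- each row sum equals diagonal term
  have hrow : ∀ i, ∑ j, a i j = a i i := by
    have hsum0 : ∑ i, (∑ j, a i j - a i i) = 0 := by
      rw [Finset.sum_sub_distrib, htot, hdiag, sub_self]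
    have hterm : ∀ i ∈ Finset.univ, (0:ℝ) ≤ ∑ j, a i j - a i i := by
      intro i _
      have : a i i ≤ ∑ j, a i j :=
        Finset.single_le_sum (fun j _ => hnonneg i j) (Finset.mem_univ i)
      linarith
    intro i
    have := (Finset.sum_eq_zero_iff_of_nonneg hterm).mp hsum0 i (Finset.mem_univ i)
    linarith
  -- off-diagonal terms vanish
  have hoff : ∀ i j, i ≠ j → (E i) ((F j) ξ) = 0 := by
    intro i j hij
    have h1 : ∑ j' ∈ Finset.univ.erase i, a i j' = 0 := by
      have := Finset.add_sum_erase Finset.univ (a i) (Finset.mem_univ i)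
      rw [hrow i] at this
      linarith
    have h2 := (Finset.sum_eq_zero_iff_of_nonneg (fun j' _ => hnonneg i j')).mp h1 j
      (Finset.mem_erase.mpr ⟨hij.symm, Finset.mem_univ j⟩)
    have : ‖(E i) ((F j) ξ)‖ = 0 := by
      have := sq_eq_zero_iff.mp h2
      exact this
    exact norm_eq_zero.mp this
  intro i
  have hE : (E i) ξ = (E i) ((F i) ξ) := by
    have hFξ : ∑ j, (F j) ξ = ξ := by
      rw [← ContinuousLinearMap.sum_apply, hFsum]; rfl
    calc (E i) ξ = (E i) (∑ j, (F j) ξ) := by rw [hFξ]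
      _ = ∑ j, (E i) ((F j) ξ) := by rw [map_sum]
      _ = (E i) ((F i) ξ) := by
          rw [Finset.sum_eq_single i]
          · intro j _ hj; exact hoff i j (fun h => hj h.symm)
          · intro h; exact absurd (Finset.mem_univ i) h
  have hF : (F i) ξ = (E i) ((F i) ξ) := by
    have hcomm' : ∀ j, (E j) ((F i) ξ) = (F i) ((E j) ξ) := by
      intro j
      have := hcomm j i
      exact congrFun (congrArg DFunLike.coe this) ξ
    calc (F i) ξ = (∑ j, E j) ((F i) ξ) := by rw [hEsum]; rfl
      _ = ∑ j, (E j) ((F i) ξ) := by rw [ContinuousLinearMap.sum_apply]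
      _ = (E i) ((F i) ξ) := by
          rw [Finset.sum_eq_single i]
          · intro j _ hj; exact hoff j i hj
          · intro h; exact absurd (Finset.mem_univ i) h
  rw [hE]; exact hF.symm
end
end

section
/- Let H be a Hilbert space, ξ a unit vector, and (E_{v,i}), (F_{v,i}) mutually commuting families of projections with E_{v,i} ξ = F_{v,i} ξ for all v, i. Then the functional s(X) = ⟨X ξ, ξ⟩ is tracial on products of the E's: for any two words W₁, W₂ in the operators E_{v,i}, s(W₁ W₂) = s(W₂ W₁). -/
noncomputable section
local notation "⟪" x ", " y "⟫" => @inner ℂ _ _ x y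

namespace Stmt2Aux

variable {H : Type*} [NormedAddCommGroup H] [InnerProductSpace ℂ H] [CompleteSpace H]
variable {V : Type*} {c : ℕ}

/-- The word (product) associated to a list of indices. -/
def prodW (G : V → Fin c → (H →L[ℂ] H)) (l : List (V × Fin c)) : H →L[ℂ] H :=
  (l.map (fun p => G p.1 p.2)).prod

@[simp] lemma prodW_nil (G : V → Fin c → (H →L[ℂ] H)) : prodW G ([] : List (V × Fin c)) = 1 :=
  rfl

@[simp] lemma prodW_cons (G : V → Fin c → (H →L[ℂ] H)) (a : V × Fin c) (l : List (V × Fin c)) :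
    prodW G (a :: l) = G a.1 a.2 * prodW G l := by
  simp [prodW]

lemma prodW_append (G : V → Fin c → (H →L[ℂ] H)) (l m : List (V × Fin c)) :
    prodW G (l ++ m) = prodW G l * prodW G m := by
  simp [prodW]

/-- A word in `A` commutes with each single `B`. -/
lemma prodW_comm_single {A B : V → Fin c → (H →L[ℂ] H)}
    (h : ∀ v w i j, A v i * B w j = B w j * A v i) (w : V) (j : Fin c)
    (l : List (V × Fin c)) : prodW A l * B w j = B w j * prodW A l := by
  induction l with
  | nil => simp
  | cons a t ih =>
      simp only [prodW_cons, mul_assoc, ih]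
      rw [← mul_assoc, ← mul_assoc, h]

/-- Words in `A` commute with words in `B`. -/
lemma prodW_comm {A B : V → Fin c → (H →L[ℂ] H)}
    (h : ∀ v w i j, A v i * B w j = B w j * A v i)
    (l m : List (V × Fin c)) : prodW A l * prodW B m = prodW B m * prodW A l := by
  induction m with
  | nil => simp
  | cons a t ih =>
      simp only [prodW_cons]
      rw [← mul_assoc, prodW_comm_single h, mul_assoc, ih, ← mul_assoc]

/-- Adjoint of a word of self-adjoint operators is the reversed word. -/
lemma adjoint_prodW {G : V → Fin c → (H →L[ℂ] H)}
    (h : ∀ v i, ContinuousLinearMap.adjoint (G v i) = G v i) (l : List (V × Fin c)) :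
    ContinuousLinearMap.adjoint (prodW G l) = prodW G l.reverse := by
  induction l with
  | nil => simp [← ContinuousLinearMap.star_eq_adjoint]
  | cons a t ih =>
      rw [prodW_cons, ← ContinuousLinearMap.star_eq_adjoint, star_mul,
        ContinuousLinearMap.star_eq_adjoint, ContinuousLinearMap.star_eq_adjoint, ih, h,
        List.reverse_cons, prodW_append]
      simp

/-- `W ξ = (reverse W in B) ξ` when `A v i ξ = B v i ξ` and the families commute. -/
lemma prodW_apply_xi {A B : V → Fin c → (H →L[ℂ] H)}
    (h : ∀ v w i j, A v i * B w j = B w j * A v i)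
    {ξ : H} (hξ : ∀ v i, (A v i) ξ = (B v i) ξ) (l : List (V × Fin c)) :
    prodW A l ξ = prodW B l.reverse ξ := by
  induction l with
  | nil => simp
  | cons a t ih =>
      have hc : prodW B t.reverse * A a.1 a.2 = A a.1 a.2 * prodW B t.reverse :=
        prodW_comm_single (fun v w i j => (h w v j i).symm) a.1 a.2 t.reverse
      calc prodW A (a :: t) ξ = A a.1 a.2 (prodW A t ξ) := by simp
        _ = A a.1 a.2 (prodW B t.reverse ξ) := by rw [ih]
        _ = (A a.1 a.2 * prodW B t.reverse) ξ := rfl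
        _ = (prodW B t.reverse * A a.1 a.2) ξ := by rw [hc]
        _ = prodW B t.reverse (A a.1 a.2 ξ) := rfl
        _ = prodW B t.reverse (B a.1 a.2 ξ) := by rw [hξ]
        _ = prodW B (a :: t).reverse ξ := by
              rw [List.reverse_cons, prodW_append]; simp

end Stmt2Aux

open Stmt2Aux in
/-- The vector functional `s(X) = ⟨X ξ, ξ⟩` is tracial on products (words) of the `E`'s:
`s(W₁ W₂) = s(W₂ W₁)` for any words `W₁, W₂` in the operators `E_{v,i}`. -/
theorem stmt2 {H : Type*} [NormedAddCommGroup H] [InnerProductSpace ℂ H] [CompleteSpace H]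
    {V : Type*} {c : ℕ} (E F : V → Fin c → (H →L[ℂ] H))
    (hEproj : ∀ v i, IsIdempotentElem (E v i) ∧ ContinuousLinearMap.adjoint (E v i) = E v i)
    (hFproj : ∀ v i, IsIdempotentElem (F v i) ∧ ContinuousLinearMap.adjoint (F v i) = F v i)
    (hcomm : ∀ v w i j, E v i * F w j = F w j * E v i)
    (ξ : H) (hξ : ‖ξ‖ = 1)
    (hEF : ∀ v i, (E v i) ξ = (F v i) ξ)
    (W₁ W₂ : List (V × Fin c)) :
    ⟪((W₁.map (fun p => E p.1 p.2)).prod * (W₂.map (fun p => E p.1 p.2)).prod) ξ, ξ⟫ =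
      ⟪((W₂.map (fun p => E p.1 p.2)).prod * (W₁.map (fun p => E p.1 p.2)).prod) ξ, ξ⟫ := by
  have hEsa : ∀ v i, ContinuousLinearMap.adjoint (E v i) = E v i := fun v i => (hEproj v i).2
  have hFsa : ∀ v i, ContinuousLinearMap.adjoint (F v i) = F v i := fun v i => (hFproj v i).2
  have hFE : ∀ v i, (F v i) ξ = (E v i) ξ := fun v i => (hEF v i).symm
  have hcomm' : ∀ v w i j, F v i * E w j = E w j * F v i := fun v w i j => (hcomm w v j i).symm
  -- word in E applied to ξ equals reversed word in F applied to ξ, and vice versa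
  have hwE : ∀ l : List (V × Fin c), prodW E l ξ = prodW F l.reverse ξ :=
    prodW_apply_xi hcomm hEF
  have hwF : ∀ l : List (V × Fin c), prodW F l ξ = prodW E l.reverse ξ :=
    prodW_apply_xi hcomm' hFE
  -- master lemma: s(W_a W_b) = ⟪ prodW E b ξ, prodW F a ξ ⟫
  have hadjE : ∀ l : List (V × Fin c),
      ContinuousLinearMap.adjoint (prodW E l) = prodW E l.reverse := adjoint_prodW hEsa
  have hadjF : ∀ l : List (V × Fin c),
      ContinuousLinearMap.adjoint (prodW F l) = prodW F l.reverse := adjoint_prodW hFsa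
  -- master lemma: s(W_a W_b) = ⟪ prodW E b ξ, prodW F a ξ ⟫
  have master : ∀ a b : List (V × Fin c),
      ⟪(prodW E a * prodW E b) ξ, ξ⟫ = ⟪prodW E b ξ, prodW F a ξ⟫ := by
    intro a b
    have hA : prodW E a = ContinuousLinearMap.adjoint (prodW E a.reverse) := by
      rw [hadjE, List.reverse_reverse]
    calc ⟪(prodW E a * prodW E b) ξ, ξ⟫
        = ⟪(ContinuousLinearMap.adjoint (prodW E a.reverse)) (prodW E b ξ), ξ⟫ := by rw [← hA]; rfl
      _ = ⟪prodW E b ξ, prodW E a.reverse ξ⟫ := ContinuousLinearMap.adjoint_inner_left _ _ _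
      _ = ⟪prodW E b ξ, prodW F a ξ⟫ := by rw [hwE a.reverse, List.reverse_reverse]
  have swap : ∀ a b : List (V × Fin c),
      ⟪prodW E b ξ, prodW F a ξ⟫ = ⟪prodW E a ξ, prodW F b ξ⟫ := by
    intro a b
    have hA : prodW F a = ContinuousLinearMap.adjoint (prodW F a.reverse) := by
      rw [hadjF, List.reverse_reverse]
    calc ⟪prodW E b ξ, prodW F a ξ⟫
        = ⟪prodW E b ξ, (ContinuousLinearMap.adjoint (prodW F a.reverse)) ξ⟫ := by rw [← hA]
      _ = ⟪prodW F a.reverse (prodW E b ξ), ξ⟫ :=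
          (ContinuousLinearMap.adjoint_inner_right _ _ _)
      _ = ⟪(prodW F a.reverse * prodW E b) ξ, ξ⟫ := rfl
      _ = ⟪(prodW E b * prodW F a.reverse) ξ, ξ⟫ := by rw [prodW_comm hcomm']
      _ = ⟪prodW E b (prodW F a.reverse ξ), ξ⟫ := rfl
      _ = ⟪prodW E b (prodW E a ξ), ξ⟫ := by rw [hwF a.reverse, List.reverse_reverse]
      _ = ⟪(prodW E b * prodW E a) ξ, ξ⟫ := rfl
      _ = ⟪prodW E a ξ, prodW F b ξ⟫ := master b a
  show ⟪(prodW E W₁ * prodW E W₂) ξ, ξ⟫ = ⟪(prodW E W₂ * prodW E W₁) ξ, ξ⟫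
  rw [master W₁ W₂, swap W₁ W₂, ← master W₂ W₁]
end
end

section
/- Let G be a graph on vertices {1,…,2k+1} arranged as an odd cycle (vertex v adjacent to v+1 mod 2k+1). Suppose Y is a real symmetric (2k+2)×(2k+2) positive semidefinite matrix, indexed by {0,1,…,2k+1}, with Y_{vw} ≥ 0 for all v,w, Y_{0v} = Y_{vv} = 1 for all cycle vertices v, Y_{vw} = 0 when v ∼ w, ∑_{v∈S} Y_{vw} ≤ 1 for every clique S and vertex w, and Y_{00} + ∑_{v∈S}∑_{w∈T} Y_{vw} ≥ |S| + |T| for all cliques S, T. Then Y_{00} ≥ (2k+1)/k. -/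
/-! Every column `w` of `Y` restricted to the cycle vanishes at `w + 1`, and its entries at
consecutive vertices sum to at most `1`; cutting the cycle at `w + 1` and pairing up the remaining
`2k` vertices bounds every column sum by `k`. Hence the block sums
`B v = ∑_{a ∈ {v, v+1}} ∑_{b ∈ {0, 1}} Y_{ab}` total at most `4k`, while `B 0 = 2`. Adding the
clique inequalities for `S = {v, v+1}`, `T = {0, 1}` over the `2k` vertices `v ≠ 0` gives
`8k ≤ 2k Y₀₀ + 4k - 2`. -/

open Finset Fin.NatCast Fin.CommRing

section OrderedMonoid

variable {M : Type*} [AddCommMonoid M] [PartialOrder M] [IsOrderedAddMonoid M]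

theorem Finset.sum_range_two_mul_le_nsmul {g : ℕ → M} {c : M}
    (h : ∀ i, g (2 * i) + g (2 * i + 1) ≤ c) (m : ℕ) :
    ∑ i ∈ range (2 * m), g i ≤ m • c := by
  induction m with
  | zero => simp
  | succ m ih =>
    rw [Nat.mul_succ, sum_range_succ, sum_range_succ, add_assoc, succ_nsmul]
    exact add_le_add ih (h m)

theorem Fin.sum_le_nsmul_of_add_succ_le {k : ℕ} {f : Fin (2 * k + 1) → M} {c : M}
    (h : ∀ a, f a + f (a + 1) ≤ c) {u : Fin (2 * k + 1)} (hu : f u = 0) :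
    ∑ a, f a ≤ k • c := by
  have hwrap : u + 1 + ((2 * k : ℕ) : Fin (2 * k + 1)) = u := by
    rw [add_assoc, add_comm 1, ← Nat.cast_add_one, Fin.natCast_self, add_zero]
  calc ∑ a, f a = ∑ j ∈ range (2 * k + 1), f (u + 1 + j) := by
        rw [← Fin.sum_univ_eq_sum_range (fun j => f (u + 1 + j)),
          ← Equiv.sum_comp (Equiv.addLeft (u + 1))]
        simp [add_assoc]
    _ = ∑ j ∈ range (2 * k), f (u + 1 + j) := by rw [sum_range_succ, hwrap, hu, add_zero]
    _ ≤ k • c := sum_range_two_mul_le_nsmul (fun i => by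
        simpa [add_assoc] using h (u + 1 + (2 * i : ℕ))) k

end OrderedMonoid

theorem SimpleGraph.cycleGraph_adj_add_one {n : ℕ} [NeZero n] (hn : 1 < n) (a : Fin n) :
    (cycleGraph n).Adj a (a + 1) := by
  simp [cycleGraph_adj', Nat.mod_eq_of_lt hn]

theorem two_mul_add_one_div_le_of_cycle {k : ℕ} (hk : 0 < k)
    (Z : Fin (2 * k + 1) → Fin (2 * k + 1) → ℝ) (y : ℝ) (hdiag : ∀ v, Z v v = 1)
    (hsucc : ∀ v, Z v (v + 1) = 0)
    (hpred : ∀ v, Z (v + 1) v = 0) (hpair : ∀ a w, Z a w + Z (a + 1) w ≤ 1)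
    (hblock : ∀ v, 4 ≤ y + (Z v 0 + Z v 1 + (Z (v + 1) 0 + Z (v + 1) 1))) :
    (2 * k + 1) / k ≤ y := by
  set B : Fin (2 * k + 1) → ℝ := fun v => Z v 0 + Z v 1 + (Z (v + 1) 0 + Z (v + 1) 1)
  have hcol : ∀ w, ∑ v, Z v w ≤ k := fun w => by
    simpa using Fin.sum_le_nsmul_of_add_succ_le (hpair · w) (hpred w)
  have hB : ∑ v, B v ≤ 4 * k := by
    have hshift : ∀ w, ∑ v, Z (v + 1) w = ∑ v, Z v w :=
      fun w => Equiv.sum_comp (Equiv.addRight 1) (Z · w)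
    simp only [B, sum_add_distrib, hshift]
    linarith [hcol 0, hcol 1]
  have hB0 : B 0 = 2 := by
    have h01 : Z 0 1 = 0 := by simpa using hsucc 0
    have h10 : Z 1 0 = 0 := by simpa using hpred 0
    simp only [B, zero_add, hdiag, h01, h10]
    norm_num
  have hrest : ∑ v ∈ univ.erase 0, B v ≤ 4 * k - 2 := by
    rw [← add_sum_erase _ _ (mem_univ 0), hB0] at hB
    linarith
  have hcard : #(univ.erase (0 : Fin (2 * k + 1))) = 2 * k := by simp
  have hsum : ∑ _v ∈ univ.erase (0 : Fin (2 * k + 1)), (4 : ℝ) ≤ ∑ v ∈ univ.erase 0, (y + B v) :=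
    sum_le_sum fun v _ => hblock v
  rw [sum_add_distrib, sum_const, sum_const, hcard, nsmul_eq_mul, nsmul_eq_mul] at hsum
  rw [div_le_iff₀ (by exact_mod_cast hk)]
  push_cast at hsum
  linarith

theorem stmt9_general (k : ℕ) (hk : 2 ≤ k)
    (G : SimpleGraph (Fin (2 * k + 1))) (hG : G = SimpleGraph.cycleGraph (2 * k + 1))
    (Y : Matrix (Option (Fin (2 * k + 1))) (Option (Fin (2 * k + 1))) ℝ)
    (hvv : ∀ v : Fin (2 * k + 1), Y (some v) (some v) = 1)
    (hadj : ∀ v w : Fin (2 * k + 1), G.Adj v w → Y (some v) (some w) = 0)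
    (hclique1 : ∀ (S : Finset (Fin (2 * k + 1))), G.IsClique (S : Set (Fin (2 * k + 1))) →
      ∀ w : Fin (2 * k + 1), ∑ v ∈ S, Y (some v) (some w) ≤ 1)
    (hclique2 : ∀ (S T : Finset (Fin (2 * k + 1))),
      G.IsClique (S : Set (Fin (2 * k + 1))) → G.IsClique (T : Set (Fin (2 * k + 1))) →
      (S.card : ℝ) + T.card ≤ Y none none + ∑ v ∈ S, ∑ w ∈ T, Y (some v) (some w)) :
    (2 * k + 1 : ℝ) / k ≤ Y none none := by
  subst hG
  have hsucc (a : Fin (2 * k + 1)) : (SimpleGraph.cycleGraph (2 * k + 1)).Adj a (a + 1) :=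
    SimpleGraph.cycleGraph_adj_add_one (by omega) a
  have hpairClique (a : Fin (2 * k + 1)) : (SimpleGraph.cycleGraph (2 * k + 1)).IsClique
      (({a, a + 1} : Finset _) : Set (Fin (2 * k + 1))) := by
    simpa [SimpleGraph.isClique_pair] using fun _ => hsucc a
  refine two_mul_add_one_div_le_of_cycle (by omega) (fun v w => Y (some v) (some w)) _ hvv
    (fun v => hadj _ _ (hsucc v)) (fun v => hadj _ _ (hsucc v).symm) (fun a w => ?_) (fun v => ?_)
  · simpa [sum_pair (hsucc a).ne] using hclique1 _ (hpairClique a) w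
  · have h := hclique2 _ _ (hpairClique v) (hpairClique 0)
    rw [card_pair (hsucc v).ne, card_pair (hsucc 0).ne, sum_pair (hsucc v).ne,
      sum_pair (hsucc 0).ne, sum_pair (hsucc 0).ne, zero_add] at h
    norm_num at h
    linarith

/-- For the odd cycle `C_{2k+1}` (`k ≥ 2`), any real symmetric positive semidefinite matrix
`Y` indexed by `{0} ∪ V(C_{2k+1})` satisfying the listed linear constraints (entries
nonnegative, `Y_{0v} = Y_{vv} = 1`, `Y_{vw} = 0` on edges, row sums over cliques at most `1`,
and the clique inequality `Y₀₀ + ∑_{v∈S}∑_{w∈T} Y_{vw} ≥ |S| + |T|`) has `Y₀₀ ≥ (2k+1)/k`. -/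
theorem stmt9 (k : ℕ) (hk : 2 ≤ k)
    (G : SimpleGraph (Fin (2 * k + 1))) (hG : G = SimpleGraph.cycleGraph (2 * k + 1))
    (Y : Matrix (Option (Fin (2 * k + 1))) (Option (Fin (2 * k + 1))) ℝ)
    (hsymm : Y.IsSymm) (hpsd : Y.PosSemidef)
    (hnonneg : ∀ v w, 0 ≤ Y v w)
    (h0v : ∀ v : Fin (2 * k + 1), Y none (some v) = 1)
    (hvv : ∀ v : Fin (2 * k + 1), Y (some v) (some v) = 1)
    (hadj : ∀ v w : Fin (2 * k + 1), G.Adj v w → Y (some v) (some w) = 0)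
    (hclique1 : ∀ (S : Finset (Fin (2 * k + 1))), G.IsClique (S : Set (Fin (2 * k + 1))) →
      ∀ w : Fin (2 * k + 1), ∑ v ∈ S, Y (some v) (some w) ≤ 1)
    (hclique2 : ∀ (S T : Finset (Fin (2 * k + 1))),
      G.IsClique (S : Set (Fin (2 * k + 1))) → G.IsClique (T : Set (Fin (2 * k + 1))) →
      (S.card : ℝ) + T.card ≤ Y none none + ∑ v ∈ S, ∑ w ∈ T, Y (some v) (some w)) :
    (2 * k + 1 : ℝ) / k ≤ Y none none :=
  stmt9_general k hk G hG Y hvv hadj hclique1 hclique2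
end

section
/- Let G, H be finite graphs. If there exist Hilbert spaces with unit vectors and projection families giving feasible sets for the tracial rank: η, {E_v}_{v∈V(G)} feasible with value t (i.e., ⟨·η,η⟩ is tracial on the generated C*-algebra, E_v E_w = 0 when v ∼_G w, ⟨E_v η, η⟩ ≥ t^{-1}), and η', {E'_u}_{u∈V(H)} feasible with value t', then the tensor product family η ⊗ η', {E_v ⊗ E'_u}_{(v,u)} is a feasible set with value t·t' for the disjunctive product G ∗ H (where (v,u) ∼ (v',u') iff v ∼_G v' or u ∼_H u'). Consequently ξ_tr(G ∗ H) ≤ ξ_tr(G) ξ_tr(H). -/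
noncomputable section
open scoped ComplexOrder

/-- A witness for the tracial rank: a unital C*-algebra with a tracial state `s` and
projections `e_v` with `e_v e_w = 0` for adjacent `v, w` and `s(e_v) = u` for all `v`. -/
structure TracialWitness {V : Type*} (G : SimpleGraph V) (u : ℝ) where
  A : Type
  [nring : NormedRing A]
  [sring : StarRing A]
  [cstar : CStarRing A]
  [nalg : NormedAlgebra ℂ A]
  [cs : CompleteSpace A]
  [smod : StarModule ℂ A]
  s : A →ₗ[ℂ] ℂ
  unital : s 1 = 1
  pos : ∀ a : A, 0 ≤ s (star a * a)
  tracial : ∀ x y : A, s (x * y) = s (y * x)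
  e : V → A
  proj : ∀ v, star (e v) = e v ∧ e v * e v = e v
  orth : ∀ v w, G.Adj v w → e v * e w = 0
  val : ∀ v, s (e v) = (u : ℂ)

/-- The tracial rank `ξ_tr(G)`: the reciprocal of the supremum of the feasible values `u`. -/
def tracialRank {V : Type*} (G : SimpleGraph V) : ℝ :=
  (sSup {u : ℝ | Nonempty (TracialWitness G u)})⁻¹

/-- The disjunctive (OR, co-normal) product of two graphs. -/
def disjProd {V W : Type*} (G : SimpleGraph V) (H : SimpleGraph W) :
    SimpleGraph (V × W) where
  Adj p q := p ≠ q ∧ (G.Adj p.1 q.1 ∨ H.Adj p.2 q.2)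
  symm := by
    constructor
    rintro p q ⟨hne, h⟩
    exact ⟨hne.symm, h.imp (fun h' => h'.symm) (fun h' => h'.symm)⟩
  loopless := by
    constructor
    rintro p ⟨hne, -⟩
    exact hne rfl

/-!
The product functional `s ⊗ s'` on the algebraic tensor product `A ⊗ B` of two witnesses is a
tracial state; it is positive by the Schur product theorem, because `(s ⊗ s')(x⋆x)` is the sum of
the entries of the Hadamard product of the positive semidefinite matrices `(s (aᵢ⋆aⱼ))ᵢⱼ` and
`(s' (bᵢ⋆bⱼ))ᵢⱼ`. The elements `e_v ⊗ e'_u` are projections with the orthogonality relations of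
`G ∗ H`. A GNS construction moves this data from the ⋆-algebra `A ⊗ B` to a C⋆-algebra: on the
pre-Hilbert space `(A ⊗ B, ⟨x, y⟩ = φ (x⋆y))` left multiplication by a projection `p` is a
contraction since `x⋆x = (px)⋆(px) + ((1-p)x)⋆((1-p)x)`, and the vector state at `1` is tracial
on the norm closure of the operators acting as left multiplications.

For the tracial rank, feasible values of `G` and `H` multiply to feasible values of `G ∗ H`, so
`sup F(G) · sup F(H) ≤ sup F(G ∗ H)`. Restricting a witness for `G ∗ H` to a copy of `G` or of `H`
gives `sup F(G ∗ H) ≤ sup F(G)` and `sup F(G ∗ H) ≤ sup F(H)`, which settles the case of a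
vanishing supremum.
-/

open scoped TensorProduct

section PositiveFunctional

variable {R : Type*} [Ring R] [StarRing R] [Algebra ℂ R] [StarModule ℂ R]
  {φ : R →ₗ[ℂ] ℂ}

theorem conj_apply_star_mul (hφ : ∀ a, 0 ≤ φ (star a * a)) (x y : R) :
    star (φ (star x * y)) = φ (star y * x) := by
  -- `φ (z⋆z)` is real at `z = x + y` and at `z = x + i • y`.
  have him : ∀ a, (φ (star a * a)).im = 0 := fun a => ((Complex.nonneg_iff.mp (hφ a)).2).symm
  have hsum := him (x + y)
  have hrot := him (x + Complex.I • y)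
  simp only [star_add, star_smul, add_mul, mul_add, smul_mul_assoc, mul_smul_comm, map_add,
    map_smul, map_neg, smul_eq_mul, Complex.star_def, Complex.conj_I, Complex.add_im,
    Complex.mul_im, Complex.neg_re, Complex.neg_im, Complex.I_re, Complex.I_im, neg_mul, neg_smul,
    Complex.mul_re] at hsum hrot
  have hx := him x
  have hy := him y
  apply Complex.ext <;> simp only [Complex.star_def, Complex.conj_re, Complex.conj_im] <;>
    linarith

theorem posSemidef_of_map_star_mul_self_nonneg (hφ : ∀ a, 0 ≤ φ (star a * a)) {ι : Type*}
    [Fintype ι] (a : ι → R) : (Matrix.of fun i j => φ (star (a i) * a j)).PosSemidef := by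
  refine .of_dotProduct_mulVec_nonneg ?_ fun c => ?_
  · ext i j
    exact conj_apply_star_mul hφ (a j) (a i)
  · convert hφ (∑ i, c i • a i) using 1
    simp only [dotProduct, Matrix.mulVec, Matrix.of_apply, Pi.star_apply, star_sum, star_smul,
      Finset.sum_mul, Finset.mul_sum, smul_mul_smul_comm, map_sum, map_smul, smul_eq_mul]
    rw [Finset.sum_comm]
    exact Finset.sum_congr rfl fun i _ => Finset.sum_congr rfl fun j _ => by ring

end PositiveFunctional

theorem IsStarProjection.star_mul_self_add_one_sub {R : Type*} [Ring R] [StarRing R] {p : R}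
    (hp : IsStarProjection p) (x : R) :
    star (p * x) * (p * x) + star ((1 - p) * x) * ((1 - p) * x) = star x * x := by
  have hsq : ∀ {q : R}, IsStarProjection q → star (q * x) * (q * x) = star x * q * x :=
    fun hq => by rw [star_mul, hq.isSelfAdjoint.star_eq, mul_assoc, ← mul_assoc _ _ x,
      hq.isIdempotentElem.eq, mul_assoc]
  rw [hsq hp, hsq hp.one_sub]
  noncomm_ring

theorem IsStarProjection.tmul {R A B : Type*} [CommRing R] [StarRing R]
    [Ring A] [StarRing A] [Algebra R A] [StarModule R A]
    [Ring B] [StarRing B] [Algebra R B] [StarModule R B] {a : A} {b : B}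
    (ha : IsStarProjection a) (hb : IsStarProjection b) : IsStarProjection (a ⊗ₜ[R] b) :=
  isStarProjection_iff'.mpr
    ⟨by rw [Algebra.TensorProduct.tmul_mul_tmul, ha.isIdempotentElem.eq, hb.isIdempotentElem.eq],
      by rw [TensorProduct.star_tmul, ha.isSelfAdjoint.star_eq, hb.isSelfAdjoint.star_eq]⟩

section VectorFunctional

variable {E : Type*} [NormedAddCommGroup E] [InnerProductSpace ℂ E]

def vectorFunctional (ξ : E) : (E →L[ℂ] E) →L[ℂ] ℂ :=
  innerSL ℂ ξ ∘L ContinuousLinearMap.apply ℂ E ξ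

@[simp] theorem vectorFunctional_apply (ξ : E) (X : E →L[ℂ] E) :
    vectorFunctional ξ X = inner ℂ ξ (X ξ) := rfl

theorem vectorFunctional_star_mul_self_nonneg [CompleteSpace E] (ξ : E) (X : E →L[ℂ] E) :
    0 ≤ vectorFunctional ξ (star X * X) := by
  rw [vectorFunctional_apply, ContinuousLinearMap.star_eq_adjoint, mul_apply_eq_comp,
    ContinuousLinearMap.adjoint_inner_right, inner_self_eq_norm_sq_to_K, ← RCLike.ofReal_pow]
  exact RCLike.ofReal_nonneg.mpr (sq_nonneg _)

end VectorFunctional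

theorem map_mul_comm_of_mem_closure {M Z : Type*} [TopologicalSpace M] [Mul M] [ContinuousMul M]
    [TopologicalSpace Z] [T2Space Z] {f : M → Z} (hf : Continuous f) {S : Set M}
    (hS : ∀ x ∈ S, ∀ y ∈ S, f (x * y) = f (y * x)) {x y : M} (hx : x ∈ closure S)
    (hy : y ∈ closure S) : f (x * y) = f (y * x) := by
  have := map_mem_closure₂ (f := fun a b => (f (a * b), f (b * a))) (u := Set.diagonal Z)
    (by fun_prop) hx hy fun a ha b hb => hS a ha b hb
  rwa [isClosed_diagonal.closure_eq] at this

open scoped Pointwise in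
theorem Real.sSup_mul_sSup_le {s t : Set ℝ} (hs : s.Nonempty) (ht : t.Nonempty)
    (hs₀ : ∀ x ∈ s, 0 ≤ x) (ht₀ : ∀ y ∈ t, 0 ≤ y) {c : ℝ} (h : ∀ x ∈ s, ∀ y ∈ t, x * y ≤ c) :
    sSup s * sSup t ≤ c := by
  rw [mul_comm, ← smul_eq_mul, ← Real.sSup_smul_of_nonneg (Real.sSup_nonneg ht₀)]
  refine csSup_le (hs.smul_set) ?_
  rintro _ ⟨x, hx, rfl⟩
  calc sSup t • x = x • sSup t := by rw [smul_eq_mul, smul_eq_mul, mul_comm]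
    _ = sSup (x • t) := (Real.sSup_smul_of_nonneg (hs₀ x hx) t).symm
    _ ≤ c := csSup_le ht.smul_set (by rintro _ ⟨y, hy, rfl⟩; exact h x hx y hy)

-- With `0⁻¹ = 0`, the case `a * b = 0` needs the bounds `c ≤ a` and `c ≤ b` to force `c = 0`.
theorem inv_le_inv_mul_inv_of_mul_le {a b c : ℝ} (ha : 0 ≤ a) (hb : 0 ≤ b) (habc : a * b ≤ c)
    (hca : c ≤ a) (hcb : c ≤ b) : c⁻¹ ≤ a⁻¹ * b⁻¹ := by
  rcases ha.eq_or_lt with rfl | ha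
  · simp [le_antisymm hca (by simpa using habc)]
  rcases hb.eq_or_lt with rfl | hb
  · simp [le_antisymm hcb (by simpa using habc)]
  rw [← mul_inv]
  exact inv_anti₀ (by positivity) habc

structure TracialState (R : Type*) [Ring R] [StarRing R] [Algebra ℂ R] where
  toLinearMap : R →ₗ[ℂ] ℂ
  map_one' : toLinearMap 1 = 1
  map_star_mul_self_nonneg' : ∀ a, 0 ≤ toLinearMap (star a * a)
  map_mul_comm' : ∀ a b, toLinearMap (a * b) = toLinearMap (b * a)

namespace TracialState

section Basic

variable {R : Type*} [Ring R] [StarRing R] [Algebra ℂ R]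

instance : FunLike (TracialState R) R ℂ where
  coe τ := τ.toLinearMap
  coe_injective τ₁ τ₂ h := by
    cases τ₁; cases τ₂; congr; exact LinearMap.coe_injective h

instance : LinearMapClass (TracialState R) ℂ R ℂ where
  map_add τ := τ.toLinearMap.map_add
  map_smulₛₗ τ := τ.toLinearMap.map_smul

variable (τ : TracialState R)

@[simp] theorem coe_toLinearMap : ⇑τ.toLinearMap = τ := rfl

protected theorem map_one : τ 1 = 1 := τ.map_one'

theorem map_star_mul_self_nonneg (a : R) : 0 ≤ τ (star a * a) := τ.map_star_mul_self_nonneg' a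

theorem map_mul_comm (a b : R) : τ (a * b) = τ (b * a) := τ.map_mul_comm' a b

theorem apply_nonneg_of_isStarProjection {p : R} (hp : IsStarProjection p) : 0 ≤ τ p := by
  simpa [hp.isSelfAdjoint.star_eq, hp.isIdempotentElem.eq] using τ.map_star_mul_self_nonneg p

theorem apply_le_one_of_isStarProjection {p : R} (hp : IsStarProjection p) : τ p ≤ 1 := by
  simpa [← τ.map_one] using τ.apply_nonneg_of_isStarProjection hp.one_sub

end Basic

def complex : TracialState ℂ where
  toLinearMap := LinearMap.id
  map_one' := rfl
  map_star_mul_self_nonneg' := star_mul_self_nonneg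
  map_mul_comm' := mul_comm

section Tensor

variable {A B : Type*} [Ring A] [StarRing A] [Algebra ℂ A] [StarModule ℂ A]
  [Ring B] [StarRing B] [Algebra ℂ B] [StarModule ℂ B]

def tensor (τ₁ : TracialState A) (τ₂ : TracialState B) : TracialState (A ⊗[ℂ] B) where
  toLinearMap := LinearMap.mul' ℂ ℂ ∘ₗ TensorProduct.map τ₁.toLinearMap τ₂.toLinearMap
  map_one' := by simp [Algebra.TensorProduct.one_def, τ₁.map_one, τ₂.map_one]
  map_star_mul_self_nonneg' x := by
    obtain ⟨S, rfl⟩ := TensorProduct.exists_finset x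
    rw [← Finset.sum_coe_sort S]
    have hSchur := (posSemidef_of_map_star_mul_self_nonneg τ₁.map_star_mul_self_nonneg
      fun i : S => i.1.1).hadamard
        (posSemidef_of_map_star_mul_self_nonneg τ₂.map_star_mul_self_nonneg fun i : S => i.1.2)
    convert hSchur.dotProduct_mulVec_nonneg 1 using 1
    simp [dotProduct, Matrix.mulVec, star_sum, Finset.sum_mul, Finset.mul_sum]
    exact Finset.sum_comm
  map_mul_comm' x y := by
    induction x using TensorProduct.induction_on with
    | zero => simp
    | add x₁ x₂ h₁ h₂ => simp only [add_mul, mul_add, map_add, h₁, h₂]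
    | tmul a b =>
      induction y using TensorProduct.induction_on with
      | zero => simp
      | add y₁ y₂ h₁ h₂ => simp only [add_mul, mul_add, map_add, h₁, h₂]
      | tmul c d => simp [τ₁.map_mul_comm a c, τ₂.map_mul_comm b d]

@[simp] theorem tensor_tmul (τ₁ : TracialState A) (τ₂ : TracialState B) (a : A) (b : B) :
    τ₁.tensor τ₂ (a ⊗ₜ b) = τ₁ a * τ₂ b := rfl

end Tensor

section GNS

open UniformSpace

variable {R : Type*} [Ring R] [StarRing R] [Algebra ℂ R] [StarModule ℂ R] (τ : TracialState R)

def PreGNS (_ : TracialState R) : Type _ := R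

instance : AddCommGroup τ.PreGNS := inferInstanceAs (AddCommGroup R)
instance : Module ℂ τ.PreGNS := inferInstanceAs (Module ℂ R)

def toPreGNS : R ≃ₗ[ℂ] τ.PreGNS := LinearEquiv.refl ℂ R

abbrev preGNSCore : PreInnerProductSpace.Core ℂ τ.PreGNS where
  inner x y := τ (star (τ.toPreGNS.symm x) * τ.toPreGNS.symm y)
  conj_inner_symm x y := conj_apply_star_mul τ.map_star_mul_self_nonneg _ _
  re_inner_nonneg x := (Complex.nonneg_iff.mp (τ.map_star_mul_self_nonneg _)).1
  add_left x y z := by simp [add_mul]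
  smul_left x y r := by simp

instance : SeminormedAddCommGroup τ.PreGNS :=
  InnerProductSpace.Core.toSeminormedAddCommGroup (c := τ.preGNSCore)

instance : InnerProductSpace ℂ τ.PreGNS := InnerProductSpace.ofCore τ.preGNSCore

abbrev GNS : Type _ := Completion τ.PreGNS

def toGNS : R →ₗ[ℂ] τ.GNS := Completion.toComplL.toLinearMap ∘ₗ τ.toPreGNS.toLinearMap

theorem norm_toPreGNS_sq (x : R) : ‖τ.toPreGNS x‖ ^ 2 = (τ (star x * x)).re :=
  norm_sq_eq_re_inner (𝕜 := ℂ) _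

theorem inner_toGNS (x y : R) : inner ℂ (τ.toGNS x) (τ.toGNS y) = τ (star x * y) :=
  Completion.inner_coe _ _

theorem denseRange_toGNS : DenseRange τ.toGNS :=
  Completion.denseRange_coe.comp τ.toPreGNS.surjective.denseRange
    (Completion.continuous_coe _)

theorem ext_toGNS {X Y : τ.GNS →L[ℂ] τ.GNS} (h : ∀ x, X (τ.toGNS x) = Y (τ.toGNS x)) :
    X = Y :=
  DFunLike.coe_injective <|
    τ.denseRange_toGNS.equalizer X.continuous Y.continuous (funext h)

theorem ext_inner_toGNS {v w : τ.GNS}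
    (h : ∀ x, inner ℂ (τ.toGNS x) v = inner ℂ (τ.toGNS x) w) : v = w :=
  ext_inner_left ℂ <| congrFun <|
    τ.denseRange_toGNS.equalizer (by fun_prop) (by fun_prop) (funext h)

def projCLM {p : R} (hp : IsStarProjection p) : τ.PreGNS →L[ℂ] τ.PreGNS :=
  (τ.toPreGNS.toLinearMap ∘ₗ LinearMap.mulLeft ℂ p ∘ₗ τ.toPreGNS.symm.toLinearMap).mkContinuous 1
    fun x => by
      obtain ⟨x, rfl⟩ := τ.toPreGNS.surjective x
      have hrest := (Complex.nonneg_iff.mp (τ.map_star_mul_self_nonneg ((1 - p) * x))).1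
      simp only [LinearMap.comp_apply, LinearEquiv.coe_coe, LinearEquiv.symm_apply_apply,
        LinearMap.mulLeft_apply, one_mul]
      rw [← sq_le_sq₀ (norm_nonneg _) (norm_nonneg _), norm_toPreGNS_sq, norm_toPreGNS_sq,
        ← hp.star_mul_self_add_one_sub x, map_add, Complex.add_re]
      exact le_add_of_nonneg_right hrest

def gnsProj {p : R} (hp : IsStarProjection p) : τ.GNS →L[ℂ] τ.GNS := (τ.projCLM hp).completion

def IsLeftMul (X : τ.GNS →L[ℂ] τ.GNS) (t : R) : Prop :=
  ∀ x, X (τ.toGNS x) = τ.toGNS (t * x)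

variable {τ}

theorem isLeftMul_gnsProj {p : R} (hp : IsStarProjection p) : τ.IsLeftMul (τ.gnsProj hp) p :=
  fun _ => ContinuousLinearMap.completion_apply_coe _ _

namespace IsLeftMul

variable {X Y : τ.GNS →L[ℂ] τ.GNS} {t t' : R}

theorem eq (hX : τ.IsLeftMul X t) (hY : τ.IsLeftMul Y t) : X = Y :=
  τ.ext_toGNS fun x => by rw [hX, hY]

theorem add (hX : τ.IsLeftMul X t) (hY : τ.IsLeftMul Y t') : τ.IsLeftMul (X + Y) (t + t') :=
  fun x => by rw [add_apply, hX, hY, add_mul, map_add]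

theorem mul (hX : τ.IsLeftMul X t) (hY : τ.IsLeftMul Y t') : τ.IsLeftMul (X * Y) (t * t') :=
  fun x => by rw [mul_apply_eq_comp, hY, hX, mul_assoc]

theorem star (hX : τ.IsLeftMul X t) : τ.IsLeftMul (star X) (star t) :=
  fun x => τ.ext_inner_toGNS fun y => by
    rw [ContinuousLinearMap.star_eq_adjoint, ContinuousLinearMap.adjoint_inner_right, hX,
      inner_toGNS, inner_toGNS, star_mul, mul_assoc]

theorem algebraMap (z : ℂ) :
    τ.IsLeftMul (algebraMap ℂ (τ.GNS →L[ℂ] τ.GNS) z) (algebraMap ℂ R z) :=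
  fun x => by simp [Algebra.algebraMap_eq_smul_one]

theorem vectorFunctional_eq (hX : τ.IsLeftMul X t) : vectorFunctional (τ.toGNS 1) X = τ t := by
  rw [vectorFunctional_apply, hX, inner_toGNS, star_one, one_mul, mul_one]

end IsLeftMul

variable (τ)

def leftMulSubalgebra : StarSubalgebra ℂ (τ.GNS →L[ℂ] τ.GNS) where
  carrier := {X | ∃ t, τ.IsLeftMul X t}
  mul_mem' := fun ⟨_, hX⟩ ⟨_, hY⟩ => ⟨_, hX.mul hY⟩
  add_mem' := fun ⟨_, hX⟩ ⟨_, hY⟩ => ⟨_, hX.add hY⟩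
  algebraMap_mem' z := ⟨_, IsLeftMul.algebraMap z⟩
  star_mem' := fun ⟨_, hX⟩ => ⟨_, hX.star⟩

abbrev gnsAlgebra : StarSubalgebra ℂ (τ.GNS →L[ℂ] τ.GNS) :=
  τ.leftMulSubalgebra.topologicalClosure

instance : IsClosed (τ.gnsAlgebra : Set (τ.GNS →L[ℂ] τ.GNS)) :=
  τ.leftMulSubalgebra.isClosed_topologicalClosure

def gnsState : TracialState τ.gnsAlgebra where
  toLinearMap := (vectorFunctional (τ.toGNS 1)).toLinearMap ∘ₗ τ.gnsAlgebra.subtype.toLinearMap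
  map_one' := by
    change vectorFunctional (τ.toGNS 1) 1 = 1
    rw [vectorFunctional_apply, one_apply_eq_self, inner_toGNS, star_one, one_mul, τ.map_one]
  map_star_mul_self_nonneg' X := vectorFunctional_star_mul_self_nonneg _ X.1
  map_mul_comm' X Y :=
    map_mul_comm_of_mem_closure (vectorFunctional (τ.toGNS 1)).continuous
      (fun _ hX _ hY => by
        obtain ⟨_, hX⟩ := hX
        obtain ⟨_, hY⟩ := hY
        rw [(hX.mul hY).vectorFunctional_eq, (hY.mul hX).vectorFunctional_eq, τ.map_mul_comm])
      X.2 Y.2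

def gnsProjection {p : R} (hp : IsStarProjection p) : τ.gnsAlgebra :=
  ⟨τ.gnsProj hp, τ.leftMulSubalgebra.le_topologicalClosure ⟨p, isLeftMul_gnsProj hp⟩⟩

theorem isStarProjection_gnsProjection {p : R} (hp : IsStarProjection p) :
    IsStarProjection (τ.gnsProjection hp) :=
  isStarProjection_iff'.mpr ⟨Subtype.ext <| ((isLeftMul_gnsProj hp).mul (isLeftMul_gnsProj hp)).eq
      (by rw [hp.isIdempotentElem.eq]; exact isLeftMul_gnsProj hp),
    Subtype.ext <| (isLeftMul_gnsProj hp).star.eq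
      (by rw [hp.isSelfAdjoint.star_eq]; exact isLeftMul_gnsProj hp)⟩

theorem gnsProjection_mul_eq_zero {p q : R} (hp : IsStarProjection p) (hq : IsStarProjection q)
    (hpq : p * q = 0) : τ.gnsProjection hp * τ.gnsProjection hq = 0 :=
  Subtype.ext <| ((isLeftMul_gnsProj hp).mul (isLeftMul_gnsProj hq)).eq
    (by rw [hpq]; exact fun x => by simp)

theorem gnsState_gnsProjection {p : R} (hp : IsStarProjection p) :
    τ.gnsState (τ.gnsProjection hp) = τ p :=
  (isLeftMul_gnsProj hp).vectorFunctional_eq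

end GNS

end TracialState

namespace TracialWitness

variable {V W : Type*} {G : SimpleGraph V} {H : SimpleGraph W} {u u' : ℝ}

attribute [local instance] nring sring cstar nalg cs smod

def tracialState (w : TracialWitness G u) : TracialState w.A :=
  ⟨w.s, w.unital, w.pos, w.tracial⟩

theorem isStarProjection_e (w : TracialWitness G u) (v : V) : IsStarProjection (w.e v) :=
  isStarProjection_iff'.mpr ⟨(w.proj v).2, (w.proj v).1⟩

theorem mem_Icc (w : TracialWitness G u) (v : V) : u ∈ Set.Icc 0 1 := by
  have h₀ := w.tracialState.apply_nonneg_of_isStarProjection (w.isStarProjection_e v)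
  have h₁ := w.tracialState.apply_le_one_of_isStarProjection (w.isStarProjection_e v)
  rw [show w.tracialState (w.e v) = u from w.val v] at h₀ h₁
  exact ⟨Complex.zero_le_real.mp h₀, by exact_mod_cast h₁⟩

def ofCStarAlgebra {A : Type} [CStarAlgebra A] (τ : TracialState A) (e : V → A)
    (he : ∀ v, IsStarProjection (e v)) (horth : ∀ v w, G.Adj v w → e v * e w = 0)
    (hval : ∀ v, τ (e v) = u) : TracialWitness G u where
  A := A
  s := τ.toLinearMap
  unital := τ.map_one
  pos := τ.map_star_mul_self_nonneg
  tracial := τ.map_mul_comm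
  e := e
  proj v := ⟨(he v).isSelfAdjoint.star_eq, (he v).isIdempotentElem.eq⟩
  orth := horth
  val := hval

def ofStarAlgebra {R : Type} [Ring R] [StarRing R] [Algebra ℂ R] [StarModule ℂ R]
    (τ : TracialState R) (e : V → R) (he : ∀ v, IsStarProjection (e v))
    (horth : ∀ v w, G.Adj v w → e v * e w = 0) (hval : ∀ v, τ (e v) = u) : TracialWitness G u :=
  ofCStarAlgebra τ.gnsState (fun v => τ.gnsProjection (he v))
    (fun v => τ.isStarProjection_gnsProjection (he v))
    (fun v w h => τ.gnsProjection_mul_eq_zero _ _ (horth v w h))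
    fun v => (τ.gnsState_gnsProjection _).trans (hval v)

variable (G) in
def zero : TracialWitness G 0 :=
  ofCStarAlgebra .complex 0 (fun _ => .zero ℂ) (fun _ _ _ => mul_zero 0) fun _ => map_zero _

variable (G) in
def ofIsEmpty [IsEmpty V] (u : ℝ) : TracialWitness G u :=
  ofCStarAlgebra .complex isEmptyElim isEmptyElim isEmptyElim isEmptyElim

def comap {V' : Type*} {G' : SimpleGraph V'} (f : G' →g G) (w : TracialWitness G u) :
    TracialWitness G' u :=
  letI : CStarAlgebra w.A := {}
  ofCStarAlgebra w.tracialState (w.e ∘ f) (fun v => w.isStarProjection_e (f v))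
    (fun _ _ h => w.orth _ _ (f.map_rel h)) fun v => w.val (f v)

def tensor (w₁ : TracialWitness G u) (w₂ : TracialWitness H u') :
    TracialWitness (disjProd G H) (u * u') :=
  ofStarAlgebra (w₁.tracialState.tensor w₂.tracialState) (fun p => w₁.e p.1 ⊗ₜ w₂.e p.2)
    (fun p => (w₁.isStarProjection_e p.1).tmul (w₂.isStarProjection_e p.2))
    (fun p q h => by
      rcases h.2 with h | h
      · rw [Algebra.TensorProduct.tmul_mul_tmul, w₁.orth _ _ h, TensorProduct.zero_tmul]
      · rw [Algebra.TensorProduct.tmul_mul_tmul, w₂.orth _ _ h, TensorProduct.tmul_zero])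
    fun p => by
      rw [TracialState.tensor_tmul, Complex.ofReal_mul]
      exact congr_arg₂ _ (w₁.val p.1) (w₂.val p.2)

end TracialWitness

section DisjProd

variable {V W : Type*} (G : SimpleGraph V) (H : SimpleGraph W)

def disjProd.inl (w : W) : G →g disjProd G H where
  toFun v := (v, w)
  map_rel' h := ⟨fun hv => h.ne (congrArg Prod.fst hv), Or.inl h⟩

def disjProd.inr (v : V) : H →g disjProd G H where
  toFun w := (v, w)
  map_rel' h := ⟨fun hw => h.ne (congrArg Prod.snd hw), Or.inr h⟩

end DisjProd

section FeasibleValues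

variable {V W : Type*} (G : SimpleGraph V) (H : SimpleGraph W)

def feasibleValues : Set ℝ := {u | Nonempty (TracialWitness G u)}

theorem tracialRank_eq_inv_sSup_feasibleValues : tracialRank G = (sSup (feasibleValues G))⁻¹ :=
  rfl

theorem zero_mem_feasibleValues : 0 ∈ feasibleValues G := ⟨.zero G⟩

theorem feasibleValues_subset_Icc [Nonempty V] : feasibleValues G ⊆ Set.Icc 0 1 :=
  fun _ ⟨w⟩ => w.mem_Icc (Classical.arbitrary V)

theorem bddAbove_feasibleValues [Nonempty V] : BddAbove (feasibleValues G) :=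
  ⟨1, fun _ hu => (feasibleValues_subset_Icc G hu).2⟩

theorem sSup_feasibleValues_nonneg [Nonempty V] : 0 ≤ sSup (feasibleValues G) :=
  Real.sSup_nonneg fun _ hu => (feasibleValues_subset_Icc G hu).1

theorem tracialRank_of_isEmpty [IsEmpty V] : tracialRank G = 0 := by
  have : feasibleValues G = Set.univ :=
    Set.eq_univ_of_forall fun u => ⟨TracialWitness.ofIsEmpty G u⟩
  rw [tracialRank_eq_inv_sSup_feasibleValues, this, Real.sSup_univ, inv_zero]

variable {G H}

theorem mul_mem_feasibleValues_disjProd {x y : ℝ} (hx : x ∈ feasibleValues G)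
    (hy : y ∈ feasibleValues H) : x * y ∈ feasibleValues (disjProd G H) :=
  ⟨hx.some.tensor hy.some⟩

theorem sSup_mul_sSup_feasibleValues_le [Nonempty V] [Nonempty W] :
    sSup (feasibleValues G) * sSup (feasibleValues H) ≤ sSup (feasibleValues (disjProd G H)) :=
  Real.sSup_mul_sSup_le ⟨0, zero_mem_feasibleValues G⟩ ⟨0, zero_mem_feasibleValues H⟩
    (fun _ hx => (feasibleValues_subset_Icc G hx).1)
    (fun _ hy => (feasibleValues_subset_Icc H hy).1)
    fun _ hx _ hy => le_csSup (bddAbove_feasibleValues _) (mul_mem_feasibleValues_disjProd hx hy)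

theorem sSup_feasibleValues_disjProd_le_left [Nonempty V] [Nonempty W] :
    sSup (feasibleValues (disjProd G H)) ≤ sSup (feasibleValues G) :=
  csSup_le_csSup (bddAbove_feasibleValues G) ⟨0, zero_mem_feasibleValues _⟩
    fun _ ⟨w⟩ => ⟨w.comap (disjProd.inl G H (Classical.arbitrary W))⟩

theorem sSup_feasibleValues_disjProd_le_right [Nonempty V] [Nonempty W] :
    sSup (feasibleValues (disjProd G H)) ≤ sSup (feasibleValues H) :=
  csSup_le_csSup (bddAbove_feasibleValues H) ⟨0, zero_mem_feasibleValues _⟩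
    fun _ ⟨w⟩ => ⟨w.comap (disjProd.inr G H (Classical.arbitrary V))⟩

end FeasibleValues

/-- Feasible sets for the tracial rank multiply under the disjunctive product, and
consequently `ξ_tr(G ∗ H) ≤ ξ_tr(G) · ξ_tr(H)`. -/
theorem stmt13 {V W : Type*} (G : SimpleGraph V) (H : SimpleGraph W) :
    (∀ (u u' : ℝ), TracialWitness G u → TracialWitness H u' →
      Nonempty (TracialWitness (disjProd G H) (u * u'))) ∧
    tracialRank (disjProd G H) ≤ tracialRank G * tracialRank H := by
  refine ⟨fun u u' w₁ w₂ => ⟨w₁.tensor w₂⟩, ?_⟩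
  rcases isEmpty_or_nonempty V with hV | hV
  · simp [tracialRank_of_isEmpty]
  rcases isEmpty_or_nonempty W with hW | hW
  · simp [tracialRank_of_isEmpty]
  simp only [tracialRank_eq_inv_sSup_feasibleValues]
  exact inv_le_inv_mul_inv_of_mul_le (sSup_feasibleValues_nonneg G) (sSup_feasibleValues_nonneg H)
    sSup_mul_sSup_feasibleValues_le sSup_feasibleValues_disjProd_le_left
    sSup_feasibleValues_disjProd_le_right
end
end

section
/- For every graph G, the tracial rank satisfies ξ_tr(G) ≤ ξ_f(G) ≤ χ_f(G), where ξ_f is the projective rank and χ_f the fractional chromatic number. In particular, any d/r-projective representation of G (projections E_v of rank r on ℂ^d with E_v E_w = 0 for v ∼ w) together with the normalized trace on M_d gives a witness for ξ_tr(G) ≤ d/r. -/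
noncomputable section
open scoped ComplexOrder

/-- The projective rank `ξ_f(G)`: the infimum of `d / r` over all `d/r`-projective
representations of `G` (rank-`r` projections `E_v` on `ℂ^d` with `E_v E_w = 0` on edges). -/
def projRank {V : Type*} (G : SimpleGraph V) : ℝ :=
  sInf {x : ℝ | ∃ d r : ℕ, 0 < r ∧ x = (d : ℝ) / r ∧
    ∃ E : V → Matrix (Fin d) (Fin d) ℂ,
      (∀ v, (E v).IsHermitian ∧ E v * E v = E v ∧ (E v).rank = r) ∧
      ∀ v w, G.Adj v w → E v * E w = 0}

/-- The fractional chromatic number of a graph. -/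
def fracChromNum {V : Type*} (G : SimpleGraph V) : ℝ :=
  sInf {x : ℝ | ∃ a b : ℕ, 0 < b ∧ x = (a : ℝ) / b ∧
    ∃ f : V → Finset (Fin a), (∀ v, (f v).card = b) ∧
      ∀ v w, G.Adj v w → Disjoint (f v) (f w)}

/-!
A fractional colouring `f : V → Finset (Fin a)` by `b`-sets becomes an `a/b`-projective
representation through the diagonal projections onto the coordinates in `f v`, so every value
competing for `χ_f` also competes for `ξ_f`. A `d/r`-projective representation with the
normalized trace of `M_d(ℂ)` is a tracial witness of value `r/d`, because the trace of an
idempotent is its rank. Every feasible value is at most `1`, so the supremum defining `ξ_tr`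
dominates `r/d` and `ξ_tr ≤ d/r`.
-/

open scoped Matrix.Norms.L2Operator

namespace Matrix

variable {n K : Type*} [DecidableEq n]

theorem trace_eq_rank_of_isIdempotentElem [Fintype n] [Field K] {E : Matrix n n K}
    (hE : IsIdempotentElem E) : E.trace = E.rank := by
  have hE' : IsIdempotentElem (toLin' E) := hE.map (toLinAlgEquiv' (R := K))
  rw [← trace_toLin'_eq, (LinearMap.IsIdempotentElem.isProj_range _ hE').trace, rank,
    toLin'_apply']

def coordProj [Semiring K] (s : Finset n) : Matrix n n K :=
  diagonal fun i => if i ∈ s then 1 else 0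

variable (s t : Finset n)

theorem isHermitian_coordProj [Semiring K] [StarRing K] :
    (coordProj s : Matrix n n K).IsHermitian := by
  rw [coordProj, isHermitian_diagonal_iff]
  intro i
  split_ifs <;> simp

theorem coordProj_mul_coordProj [Fintype n] [Semiring K] :
    (coordProj s * coordProj t : Matrix n n K) = coordProj (s ∩ t) := by
  simp only [coordProj, diagonal_mul_diagonal]
  congr 1
  ext i
  by_cases hs : i ∈ s <;> by_cases ht : i ∈ t <;> simp [hs, ht]

theorem rank_coordProj [Fintype n] [Field K] : (coordProj s : Matrix n n K).rank = s.card := by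
  classical
  rw [coordProj, rank_diagonal]
  simp

end Matrix

namespace Matrix

variable (n : Type*) [Fintype n]

def normalizedTrace : Matrix n n ℂ →ₗ[ℂ] ℂ :=
  (Fintype.card n : ℂ)⁻¹ • traceLinearMap n ℂ ℂ

variable {n}

theorem normalizedTrace_apply (a : Matrix n n ℂ) :
    normalizedTrace n a = (Fintype.card n : ℂ)⁻¹ * a.trace := rfl

theorem normalizedTrace_one [DecidableEq n] [Nonempty n] : normalizedTrace n 1 = 1 := by
  rw [normalizedTrace_apply, trace_one]
  exact inv_mul_cancel₀ (by simp)

theorem normalizedTrace_mul_comm (a b : Matrix n n ℂ) :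
    normalizedTrace n (a * b) = normalizedTrace n (b * a) := by
  rw [normalizedTrace_apply, normalizedTrace_apply, trace_mul_comm]

theorem normalizedTrace_star_mul_self_nonneg (a : Matrix n n ℂ) :
    0 ≤ normalizedTrace n (star a * a) := by
  rw [normalizedTrace_apply, star_eq_conjTranspose]
  exact mul_nonneg (by positivity) (posSemidef_conjTranspose_mul_self a).trace_nonneg

end Matrix

section TracialWitness

variable {V : Type*} {G : SimpleGraph V}

def TracialWitness.ofProjRep {n : Type} [Fintype n] [DecidableEq n] [Nonempty n] {r : ℕ}
    (E : V → Matrix n n ℂ)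
    (hE : ∀ v, (E v).IsHermitian ∧ E v * E v = E v ∧ (E v).rank = r)
    (horth : ∀ v w, G.Adj v w → E v * E w = 0) :
    TracialWitness G (r / Fintype.card n) where
  A := Matrix n n ℂ
  s := Matrix.normalizedTrace n
  unital := Matrix.normalizedTrace_one
  pos := Matrix.normalizedTrace_star_mul_self_nonneg
  tracial := Matrix.normalizedTrace_mul_comm
  e := E
  proj v := ⟨(hE v).1, (hE v).2.1⟩
  orth := horth
  val v := by
    rw [Matrix.normalizedTrace_apply, Matrix.trace_eq_rank_of_isIdempotentElem (hE v).2.1,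
      (hE v).2.2]
    push_cast
    exact inv_mul_eq_div _ _

/-- Positivity of `s` at `1 - e` forces `s e ≤ s 1 = 1` for every projection `e`. -/
theorem TracialWitness.le_one [Nonempty V] {u : ℝ} (W : TracialWitness G u) : u ≤ 1 := by
  let := W.nring; let := W.sring; let := W.nalg
  obtain v := Classical.arbitrary V
  obtain ⟨hstar, hidem⟩ := W.proj v
  have hcompl : star (1 - W.e v) * (1 - W.e v) = 1 - W.e v := by
    rw [star_sub, star_one, hstar, sub_mul, one_mul, mul_sub, mul_one, hidem, sub_self, sub_zero]
  have h := W.pos (1 - W.e v)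
  rw [hcompl, map_sub, W.unital, W.val v, sub_nonneg] at h
  exact_mod_cast h

theorem tracialRank_le_inv [Nonempty V] {u : ℝ} (hu : 0 < u) (W : TracialWitness G u) :
    tracialRank G ≤ u⁻¹ := by
  have hbdd : BddAbove {u : ℝ | Nonempty (TracialWitness G u)} := ⟨1, fun _ ⟨W⟩ => W.le_one⟩
  exact inv_anti₀ hu (le_csSup hbdd ⟨W⟩)

end TracialWitness

section Coloring

variable {V : Type*} (G : SimpleGraph V)

theorem exists_fracColoring_singleton [Fintype V] :
    ∃ f : V → Finset (Fin (Fintype.card V)), (∀ v, (f v).card = 1) ∧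
      ∀ v w, G.Adj v w → Disjoint (f v) (f w) := by
  refine ⟨fun v => {Fintype.equivFin V v}, fun v => Finset.card_singleton _, fun v w hvw => ?_⟩
  rw [Finset.disjoint_singleton]
  exact fun h => hvw.ne ((Fintype.equivFin V).injective h)

theorem exists_projRep_of_fracColoring {a b : ℕ} {f : V → Finset (Fin a)}
    (hcard : ∀ v, (f v).card = b) (hdisj : ∀ v w, G.Adj v w → Disjoint (f v) (f w)) :
    ∃ E : V → Matrix (Fin a) (Fin a) ℂ,
      (∀ v, (E v).IsHermitian ∧ E v * E v = E v ∧ (E v).rank = b) ∧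
      ∀ v w, G.Adj v w → E v * E w = 0 := by
  refine ⟨fun v => Matrix.coordProj (f v), fun v => ⟨Matrix.isHermitian_coordProj _, ?_, ?_⟩,
    fun v w hvw => ?_⟩
  · rw [Matrix.coordProj_mul_coordProj, Finset.inter_self]
  · rw [Matrix.rank_coordProj, hcard]
  · rw [Matrix.coordProj_mul_coordProj, Finset.disjoint_iff_inter_eq_empty.mp (hdisj v w hvw)]
    simp [Matrix.coordProj]

end Coloring

section Ranks

variable {V : Type*} (G : SimpleGraph V)

theorem projRank_le_fracChromNum [Fintype V] : projRank G ≤ fracChromNum G := by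
  refine csInf_le_csInf ⟨0, ?_⟩ ⟨_, _, 1, one_pos, rfl, exists_fracColoring_singleton G⟩ ?_
  · rintro _ ⟨d, r, -, rfl, -⟩
    positivity
  · rintro _ ⟨a, b, hb, rfl, f, hcard, hdisj⟩
    exact ⟨a, b, hb, rfl, exists_projRep_of_fracColoring G hcard hdisj⟩

theorem dim_pos_of_projRep [Nonempty V] {d r : ℕ} (hr : 0 < r)
    {E : V → Matrix (Fin d) (Fin d) ℂ} (hE : ∀ v, (E v).rank = r) : 0 < d :=
  hr.trans_le (hE (Classical.arbitrary V) ▸ Matrix.rank_le_width _)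

theorem exists_tracialWitness_of_projRep [Nonempty V] {d r : ℕ} (hr : 0 < r)
    {E : V → Matrix (Fin d) (Fin d) ℂ}
    (hE : ∀ v, (E v).IsHermitian ∧ E v * E v = E v ∧ (E v).rank = r)
    (horth : ∀ v w, G.Adj v w → E v * E w = 0) :
    Nonempty (TracialWitness G (r / d)) := by
  have := Fin.pos_iff_nonempty.mp (dim_pos_of_projRep hr fun v => (hE v).2.2)
  simpa using Nonempty.intro (TracialWitness.ofProjRep E hE horth)

theorem tracialRank_le_projRank [Fintype V] [Nonempty V] : tracialRank G ≤ projRank G := by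
  obtain ⟨f, hcard, hdisj⟩ := exists_fracColoring_singleton G
  obtain ⟨E, hE⟩ := exists_projRep_of_fracColoring G hcard hdisj
  refine le_csInf ⟨_, _, 1, one_pos, rfl, E, hE⟩ ?_
  rintro _ ⟨d, r, hr, rfl, E, hE, horth⟩
  obtain ⟨W⟩ := exists_tracialWitness_of_projRep G hr hE horth
  have hd := dim_pos_of_projRep hr fun v => (hE v).2.2
  simpa using tracialRank_le_inv (by positivity) W

end Ranks

/-- `ξ_tr(G) ≤ ξ_f(G) ≤ χ_f(G)`, and every `d/r`-projective representation of `G` yields a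
tracial-rank witness with value `r/d` (via the normalized trace on `M_d`). -/
theorem stmt14 {V : Type*} [Fintype V] [Nonempty V] (G : SimpleGraph V) :
    tracialRank G ≤ projRank G ∧ projRank G ≤ fracChromNum G ∧
    ∀ (d r : ℕ), 0 < r → ∀ E : V → Matrix (Fin d) (Fin d) ℂ,
      (∀ v, (E v).IsHermitian ∧ E v * E v = E v ∧ (E v).rank = r) →
      (∀ v w, G.Adj v w → E v * E w = 0) →
      Nonempty (TracialWitness G ((r : ℝ) / d)) :=
  ⟨tracialRank_le_projRank G, projRank_le_fracChromNum G,
    fun _ _ hr _ hE horth => exists_tracialWitness_of_projRep G hr hE horth⟩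
end
end
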